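/- arXiv:0803.4326 — 4 statements merged into one kernel-verified Lean document; each statement's English description precedes it below -/
import Mathlib

section
/- Let M be a compact metric space with a Borel probability measure μ satisfying μ(B(x,r)) ≥ c·e^{-r^{-k}} (0 < k < 1) for small r, and let u be nonnegative, L-Lipschitz with u(0) = 0. Then for every b > 0, inf over probability densities f of E[f] = ∫ f log f dμ + (b/2)∫∫ u(d(x,y)) f(x) f(y) dμ dμ satisfies inf_f E[f] ≤ b^k + log(1/c) + L, for b ≥ 1 (taking f the normalized indicator of a ball of radius 1/b). -/
/-!
Test the free energy against the uniform density `μ(B)⁻¹ 1_B` of a ball `B` of radius `1/b`.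
Its entropy is `-log μ(B) ≤ b^k + log(1/c)` by the lower volume bound, and since two points of
`B` are at distance `< 2/b`, the Lipschitz bound `u d ≤ L d` caps the interaction kernel on
`B × B` by `2L/b`, so the interaction term is at most `(b/2)(2L/b) = L`.
-/

open MeasureTheory Real

namespace MeasureTheory

variable {α : Type*} [MeasurableSpace α]

noncomputable def uniformDensity (μ : Measure α) (s : Set α) : α → ℝ :=
  s.indicator fun _ => (μ.real s)⁻¹

variable {μ : Measure α} {s : Set α}

lemma uniformDensity_nonneg (x : α) : 0 ≤ uniformDensity μ s x :=
  Set.indicator_nonneg (fun _ _ => inv_nonneg.mpr measureReal_nonneg) x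

lemma mem_of_uniformDensity_ne_zero {x : α} (hx : uniformDensity μ s x ≠ 0) : x ∈ s :=
  Set.mem_of_indicator_ne_zero hx

lemma integrable_uniformDensity [IsFiniteMeasure μ] (hs : MeasurableSet s) :
    Integrable (uniformDensity μ s) μ :=
  (integrable_const _).indicator hs

lemma integral_uniformDensity (hs : MeasurableSet s) (hμs : μ.real s ≠ 0) :
    ∫ x, uniformDensity μ s x ∂μ = 1 := by
  rw [uniformDensity, integral_indicator_const _ hs, smul_eq_mul, mul_inv_cancel₀ hμs]

lemma integral_uniformDensity_mul_log (hs : MeasurableSet s) (hμs : μ.real s ≠ 0) :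
    ∫ x, uniformDensity μ s x * log (uniformDensity μ s x) ∂μ = -log (μ.real s) := by
  have hpoint : (fun x => uniformDensity μ s x * log (uniformDensity μ s x))
      = s.indicator fun _ => (μ.real s)⁻¹ * log (μ.real s)⁻¹ := by
    ext x
    by_cases hx : x ∈ s <;> simp [uniformDensity, hx]
  rw [hpoint, integral_indicator_const _ hs, smul_eq_mul, log_inv, ← mul_assoc,
    mul_inv_cancel₀ hμs, one_mul]

lemma integral_integral_kernel_mul_le {f : α → ℝ} {K : α → α → ℝ} {C : ℝ}
    (hf0 : ∀ x, 0 ≤ f x) (hf : Integrable f μ) (hf1 : ∫ x, f x ∂μ = 1)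
    (hK0 : ∀ x y, 0 ≤ K x y) (hKC : ∀ x y, f x ≠ 0 → f y ≠ 0 → K x y ≤ C) :
    ∫ x, ∫ y, K x y * f x * f y ∂μ ∂μ ≤ C := by
  have hnonneg : ∀ x y, 0 ≤ K x y * f x * f y := fun x y =>
    mul_nonneg (mul_nonneg (hK0 x y) (hf0 x)) (hf0 y)
  have hpoint : ∀ x y, K x y * f x * f y ≤ C * f x * f y := by
    intro x y
    by_cases hx : f x = 0
    · simp [hx]
    by_cases hy : f y = 0
    · simp [hy]
    exact mul_le_mul_of_nonneg_right (mul_le_mul_of_nonneg_right (hKC x y hx hy) (hf0 x)) (hf0 y)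
  have hinner : ∀ x, ∫ y, K x y * f x * f y ∂μ ≤ C * f x := fun x =>
    calc ∫ y, K x y * f x * f y ∂μ ≤ ∫ y, C * f x * f y ∂μ :=
          integral_mono_of_nonneg (.of_forall (hnonneg x))
            (hf.const_mul _) (.of_forall (hpoint x))
      _ = C * f x := by rw [integral_const_mul, hf1, mul_one]
  calc ∫ x, ∫ y, K x y * f x * f y ∂μ ∂μ ≤ ∫ x, C * f x ∂μ :=
        integral_mono_of_nonneg
          (.of_forall fun x => integral_nonneg (hnonneg x))
          (hf.const_mul _) (.of_forall hinner)
    _ = C := by rw [integral_const_mul, hf1, mul_one]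

end MeasureTheory

lemma LipschitzWith.apply_dist_le_of_mem_ball {M : Type*} [PseudoMetricSpace M] {u : ℝ → ℝ}
    {L : NNReal} (huL : LipschitzWith L u) (huz : u 0 = 0) {z x y : M} {r : ℝ}
    (hx : x ∈ Metric.ball z r) (hy : y ∈ Metric.ball z r) :
    u (dist x y) ≤ 2 * L * r := by
  have hdist : dist x y ≤ 2 * r := by
    linarith [dist_triangle_right x y z, Metric.mem_ball.mp hx, Metric.mem_ball.mp hy]
  calc u (dist x y) ≤ ‖u (dist x y)‖ := le_abs_self _
    _ ≤ L * ‖dist x y‖ := huL.norm_le_mul huz _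
    _ = L * dist x y := by rw [norm_of_nonneg dist_nonneg]
    _ ≤ 2 * L * r := by nlinarith [L.coe_nonneg]

lemma neg_log_le_of_mul_exp_neg_le {c a m : ℝ} (hc : 0 < c) (hm : c * exp (-a) ≤ m) :
    -log m ≤ a + log (1 / c) := by
  have hlog := log_le_log (by positivity) hm
  rw [log_mul hc.ne' (exp_ne_zero _), log_exp] at hlog
  rw [one_div, log_inv]
  linarith

theorem free_energy_inf_bound_general {M : Type*} [MetricSpace M]
    [MeasurableSpace M] [BorelSpace M]
    (μ : Measure M) [IsProbabilityMeasure μ]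
    (c k r₀ : ℝ) (hc : 0 < c)
    (hball : ∀ x : M, ∀ r : ℝ, 0 < r → r ≤ r₀ →
      ENNReal.ofReal (c * Real.exp (-r ^ (-k))) ≤ μ (Metric.ball x r))
    (u : ℝ → ℝ) (L : NNReal) (hu0 : ∀ d, 0 ≤ u d) (huL : LipschitzWith L u)
    (huz : u 0 = 0)
    (b : ℝ) (hb : 1 ≤ b) (hbr : 1 / b ≤ r₀) :
    ∃ f : M → ℝ, (∀ x, 0 ≤ f x) ∧ Integrable f μ ∧ (∫ x, f x ∂μ) = 1 ∧
      (∫ x, f x * Real.log (f x) ∂μ)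
        + (b / 2) * ∫ x, ∫ y, u (dist x y) * f x * f y ∂μ ∂μ
      ≤ b ^ k + Real.log (1 / c) + L := by
  have hb0 : 0 < b := one_pos.trans_le hb
  obtain ⟨x₀⟩ := nonempty_of_isProbabilityMeasure μ
  set B := Metric.ball x₀ (1 / b)
  have hB : MeasurableSet B := measurableSet_ball
  have hμB : c * exp (-b ^ k) ≤ μ.real B := by
    have := ENNReal.toReal_mono (measure_ne_top μ B) (hball x₀ (1 / b) (by positivity) hbr)
    rwa [ENNReal.toReal_ofReal (by positivity), one_div, inv_rpow hb0.le, rpow_neg hb0.le,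
      inv_inv] at this
  have hμB0 : μ.real B ≠ 0 := (lt_of_lt_of_le (by positivity) hμB).ne'
  have hf1 := integral_uniformDensity hB hμB0
  refine ⟨uniformDensity μ B, uniformDensity_nonneg, integrable_uniformDensity hB, hf1, ?_⟩
  have hinteraction : ∫ x, ∫ y, u (dist x y) * uniformDensity μ B x * uniformDensity μ B y ∂μ ∂μ
      ≤ 2 * L * (1 / b) :=
    integral_integral_kernel_mul_le uniformDensity_nonneg (integrable_uniformDensity hB) hf1
      (fun _ _ => hu0 _) fun _ _ hx hy => huL.apply_dist_le_of_mem_ball huz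
        (mem_of_uniformDensity_ne_zero hx) (mem_of_uniformDensity_ne_zero hy)
  have hhalf : b / 2 * (2 * L * (1 / b)) = L := by field_simp
  rw [integral_uniformDensity_mul_log hB hμB0]
  linarith [neg_log_le_of_mul_exp_neg_le hc hμB,
    mul_le_mul_of_nonneg_left hinteraction (by positivity : 0 ≤ b / 2)]

theorem free_energy_inf_bound {M : Type*} [MetricSpace M] [CompactSpace M]
    [MeasurableSpace M] [BorelSpace M]
    (μ : Measure M) [IsProbabilityMeasure μ]
    (c k r₀ : ℝ) (hc : 0 < c) (hk : 0 < k) (hk1 : k < 1) (hr₀ : 0 < r₀)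
    (hball : ∀ x : M, ∀ r : ℝ, 0 < r → r ≤ r₀ →
      ENNReal.ofReal (c * Real.exp (-r ^ (-k))) ≤ μ (Metric.ball x r))
    (u : ℝ → ℝ) (L : NNReal) (hu0 : ∀ d, 0 ≤ u d) (huL : LipschitzWith L u)
    (huz : u 0 = 0)
    (b : ℝ) (hb : 1 ≤ b) (hbr : 1 / b ≤ r₀) :
    ∃ f : M → ℝ, (∀ x, 0 ≤ f x) ∧ Integrable f μ ∧ (∫ x, f x ∂μ) = 1 ∧
      (∫ x, f x * Real.log (f x) ∂μ)
        + (b / 2) * ∫ x, ∫ y, u (dist x y) * f x * f y ∂μ ∂μ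
      ≤ b ^ k + Real.log (1 / c) + L :=
  free_energy_inf_bound_general μ c k r₀ hc hball u L hu0 huL huz b hb hbr
end

section
/- For z ∈ [0,1), lim_{τ→0⁺} τ^{-1/2} ∫₀^{2π} e^{-(sin θ - z)²/τ} dθ = 2√π / √(1-z²). -/
/-!
Writing `τ = 2v`, the integrand `exp (-(u - z)² / τ)` is `√(πτ)` times the density of the normal
law `N(z, v)`. By `2π`-periodicity and the symmetry `θ ↦ π - θ` the integral over `[0, 2π]` is
twice the integral over `(-π/2, π/2)`, where `u = sin θ` turns it into
`2 ∫_{-1}^{1} exp (-(u - z)² / τ) (1 - u²)^{-1/2} du`. As `v → 0` the normal densities form an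
approximate identity at `z` (Chebyshev gives mass `→ 1` near `z`, and they tend to `0` uniformly
away from `z`), and `(1 - u²)^{-1/2}` is integrable on `(-1, 1)` and continuous at `z`, so the
integral is asymptotic to `2√(πτ) / √(1 - z²)`.
-/

open Real Filter intervalIntegral

open MeasureTheory ProbabilityTheory Set Metric
open scoped NNReal Topology

variable {E : Type*} [NormedAddCommGroup E] [NormedSpace ℝ E]

lemma exp_neg_le_inv {a : ℝ} (ha : 0 < a) : exp (-a) ≤ a⁻¹ := by
  rw [exp_neg]
  exact inv_anti₀ ha (by linarith [add_one_le_exp a])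

lemma gaussianPDFReal_le_div_sq {μ x : ℝ} (v : ℝ≥0) (hx : x ≠ μ) :
    gaussianPDFReal μ v x ≤ √(2 * v / π) / (x - μ) ^ 2 := by
  rcases eq_zero_or_pos v with rfl | hv
  · simp only [gaussianPDFReal_zero_var, Pi.zero_apply]; positivity
  calc gaussianPDFReal μ v x
      ≤ (√(2 * π * v))⁻¹ * ((x - μ) ^ 2 / (2 * v))⁻¹ := by
        rw [gaussianPDFReal, neg_div]
        gcongr
        exact exp_neg_le_inv (by positivity)
    _ = √(2 * v / π) / (x - μ) ^ 2 := by
        rw [show 2 * (v : ℝ) / π = (2 * v) ^ 2 / (2 * π * v) by field_simp,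
          sqrt_div' _ (by positivity), sqrt_sq (by positivity)]
        field_simp

lemma tendstoUniformlyOn_gaussianPDFReal_compl {μ : ℝ} {u : Set ℝ} (hu : u ∈ 𝓝 μ) :
    TendstoUniformlyOn (fun v : ℝ≥0 => gaussianPDFReal μ v) 0 (𝓝 0) uᶜ := by
  obtain ⟨δ, hδ, hball⟩ := Metric.mem_nhds_iff.1 hu
  have hbound : Tendsto (fun v : ℝ≥0 => √(2 * v / π) / δ ^ 2) (𝓝 0) (𝓝 0) := by
    have : Continuous (fun v : ℝ≥0 => √(2 * v / π) / δ ^ 2) := by fun_prop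
    simpa using this.tendsto 0
  refine tendstoUniformlyOn_iff.2 fun ε hε => ?_
  filter_upwards [hbound.eventually (gt_mem_nhds hε)] with v hv x hx
  have hδx : δ ≤ |x - μ| := by
    by_contra! h
    exact hx (hball (by rwa [mem_ball, Real.dist_eq]))
  have hxμ : x ≠ μ := fun h => by simp [h] at hδx; linarith
  rw [Pi.zero_apply, dist_zero_left, Real.norm_of_nonneg (gaussianPDFReal_nonneg _ _ _)]
  calc gaussianPDFReal μ v x ≤ √(2 * v / π) / (x - μ) ^ 2 := gaussianPDFReal_le_div_sq v hxμ
    _ ≤ √(2 * v / π) / δ ^ 2 := by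
        refine div_le_div_of_nonneg_left (sqrt_nonneg _) (by positivity) ?_
        rw [← sq_abs (x - μ)]
        exact pow_le_pow_left₀ hδ.le hδx 2
    _ < ε := hv

lemma tendsto_measureReal_gaussianReal_of_mem_nhds {μ : ℝ} {s : Set ℝ} (hs : s ∈ 𝓝 μ) :
    Tendsto (fun v : ℝ≥0 => (gaussianReal μ v).real s) (𝓝 0) (𝓝 1) := by
  obtain ⟨δ, hδ, hball⟩ := Metric.mem_nhds_iff.1 hs
  have hcompl : ∀ v : ℝ≥0, (gaussianReal μ v).real (ball μ δ)ᶜ ≤ v / δ ^ 2 := by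
    intro v
    have hcheb := meas_ge_le_variance_div_sq (memLp_id_gaussianReal (μ := μ) (v := v) 2) hδ
    rw [show ∫ x, id x ∂gaussianReal μ v = μ from integral_id_gaussianReal,
      variance_id_gaussianReal] at hcheb
    have : (ball μ δ)ᶜ = {x | δ ≤ |id x - μ|} := by
      ext x; simp [Real.dist_eq]
    rw [this, measureReal_def]
    exact ENNReal.toReal_le_of_le_ofReal (by positivity) hcheb
  have hlower : Tendsto (fun v : ℝ≥0 => 1 - v / δ ^ 2) (𝓝 0) (𝓝 1) := by
    have : Continuous (fun v : ℝ≥0 => 1 - (v : ℝ) / δ ^ 2) := by fun_prop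
    simpa using this.tendsto 0
  refine tendsto_of_tendsto_of_tendsto_of_le_of_le hlower tendsto_const_nhds (fun v => ?_)
    (fun v => measureReal_le_one)
  calc 1 - v / δ ^ 2 ≤ 1 - (gaussianReal μ v).real (ball μ δ)ᶜ := by linarith [hcompl v]
    _ = (gaussianReal μ v).real (ball μ δ) := by
        rw [probReal_compl_eq_one_sub measurableSet_ball]; ring
    _ ≤ (gaussianReal μ v).real s := measureReal_mono hball

lemma setIntegral_gaussianPDFReal_eq_measureReal {μ : ℝ} {v : ℝ≥0} (hv : v ≠ 0) (s : Set ℝ) :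
    ∫ x in s, gaussianPDFReal μ v x = (gaussianReal μ v).real s := by
  rw [measureReal_def, gaussianReal_apply_eq_integral μ hv, ENNReal.toReal_ofReal]
  exact integral_nonneg fun x => gaussianPDFReal_nonneg μ v x

theorem tendsto_setIntegral_gaussianPDFReal_smul [CompleteSpace E] {μ : ℝ} {s : Set ℝ}
    {g : ℝ → E}
    (hs : MeasurableSet s) (hsμ : s ∈ 𝓝 μ) (hg : IntegrableOn g s) (hgμ : ContinuousAt g μ) :
    Tendsto (fun v : ℝ≥0 => ∫ x in s, gaussianPDFReal μ v x • g x) (𝓝[>] 0) (𝓝 (g μ)) := by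
  have ht : s ∩ ball μ 1 ∈ 𝓝 μ := inter_mem hsμ (ball_mem_nhds μ one_pos)
  refine tendsto_setIntegral_peak_smul_of_integrableOn_of_tendsto hs (hs.inter measurableSet_ball)
    inter_subset_left (mem_nhdsWithin_of_mem_nhds ht)
    ((measure_mono inter_subset_right).trans_lt measure_ball_lt_top).ne
    (Eventually.of_forall fun v x _ => gaussianPDFReal_nonneg μ v x)
    (fun u hu hμu U hU => nhdsWithin_le_nhds <|
      (tendstoUniformlyOn_gaussianPDFReal_compl (hu.mem_nhds hμu)).mono
        (sdiff_subset_compl s u) U hU)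
    ?_ (Eventually.of_forall fun v => (measurable_gaussianPDFReal μ v).aestronglyMeasurable)
    hg hgμ.continuousWithinAt
  refine ((tendsto_measureReal_gaussianReal_of_mem_nhds ht).mono_left nhdsWithin_le_nhds).congr' ?_
  filter_upwards [self_mem_nhdsWithin] with v (hv : 0 < v)
  exact (setIntegral_gaussianPDFReal_eq_measureReal hv.ne' _).symm

theorem integral_comp_sin_zero_two_pi {F : ℝ → E} (hF : Continuous F) :
    ∫ θ in (0)..(2 * π), F (sin θ) = (2 : ℝ) • ∫ θ in Ioo (-(π / 2)) (π / 2), F (sin θ) := by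
  have hFs : Continuous (fun θ => F (sin θ)) := by fun_prop
  have hper : Function.Periodic (fun θ => F (sin θ)) (2 * π) := fun θ => by simp [sin_add_two_pi]
  have hshift := hper.intervalIntegral_add_eq 0 (-(π / 2))
  have hreflect : ∫ θ in (π / 2)..(-(π / 2) + 2 * π), F (sin θ)
      = ∫ θ in (-(π / 2))..(π / 2), F (sin θ) := by
    have h := integral_comp_sub_left (fun θ => F (sin θ)) π (a := -(π / 2)) (b := π / 2)
    simp only [sin_pi_sub] at h
    rw [h]; congr 1 <;> ring
  rw [zero_add] at hshift
  rw [hshift, ← integral_add_adjacent_intervals (hFs.intervalIntegrable _ (π / 2))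
    (hFs.intervalIntegrable _ _), hreflect, integral_of_le (by linarith [pi_pos]),
    integral_Ioc_eq_integral_Ioo, two_smul]

lemma abs_cos_mul_inv_sqrt_one_sub_sin_sq {x : ℝ} (hx : x ∈ Ioo (-(π / 2)) (π / 2)) :
    |cos x| * (√(1 - sin x ^ 2))⁻¹ = 1 := by
  have hcos : 0 < cos x := cos_pos_of_mem_Ioo hx
  rw [← cos_sq', sqrt_sq hcos.le, abs_of_pos hcos, mul_inv_cancel₀ hcos.ne']

lemma sin_image_Ioo : sin '' Ioo (-(π / 2)) (π / 2) = Ioo (-1) 1 :=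
  sinPartialHomeomorph.image_source_eq_target

lemma hasDerivWithinAt_sin_Ioo :
    ∀ x ∈ Ioo (-(π / 2)) (π / 2), HasDerivWithinAt sin (cos x) (Ioo (-(π / 2)) (π / 2)) x :=
  fun x _ => (hasDerivAt_sin x).hasDerivWithinAt

theorem setIntegral_Ioo_comp_sin (F : ℝ → E) :
    ∫ θ in Ioo (-(π / 2)) (π / 2), F (sin θ) = ∫ u in Ioo (-1) 1, (√(1 - u ^ 2))⁻¹ • F u := by
  rw [← sin_image_Ioo, integral_image_eq_integral_abs_deriv_smul
    measurableSet_Ioo hasDerivWithinAt_sin_Ioo (injOn_sin.mono Ioo_subset_Icc_self)]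
  refine setIntegral_congr_fun measurableSet_Ioo fun x hx => ?_
  simp only [smul_smul, abs_cos_mul_inv_sqrt_one_sub_sin_sq hx, one_smul]

lemma integrableOn_inv_sqrt_one_sub_sq :
    IntegrableOn (fun u => (√(1 - u ^ 2))⁻¹) (Ioo (-1) 1) := by
  have h := (integrableOn_image_iff_integrableOn_abs_deriv_smul measurableSet_Ioo
    hasDerivWithinAt_sin_Ioo (injOn_sin.mono Ioo_subset_Icc_self) fun u => (√(1 - u ^ 2))⁻¹).2
  rw [sin_image_Ioo] at h
  refine h ((integrableOn_const (C := (1 : ℝ)) measure_Ioo_lt_top.ne).congr_fun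
    (fun x hx => (abs_cos_mul_inv_sqrt_one_sub_sin_sq hx).symm) measurableSet_Ioo)

lemma gaussianPDFReal_toNNReal_half {μ τ : ℝ} (hτ : 0 < τ) (x : ℝ) :
    gaussianPDFReal μ (τ / 2).toNNReal x = (√(π * τ))⁻¹ * exp (-(x - μ) ^ 2 / τ) := by
  rw [gaussianPDFReal, Real.coe_toNNReal _ (by positivity)]
  congr 3 <;> ring

theorem lambda_initial_limit (z : ℝ) (hz : z ∈ Set.Ico (0:ℝ) 1) :
    Tendsto
      (fun τ : ℝ =>
        Real.sqrt τ⁻¹ * ∫ θ in (0:ℝ)..(2 * π), Real.exp (-(Real.sin θ - z) ^ 2 / τ))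
      (nhdsWithin 0 (Set.Ioi 0))
      (nhds (2 * Real.sqrt π / Real.sqrt (1 - z ^ 2))) := by
  have hz1 : 0 < 1 - z ^ 2 := by nlinarith [hz.1, hz.2]
  have hvar : Tendsto (fun τ : ℝ => (τ / 2).toNNReal) (𝓝[>] 0) (𝓝[>] 0) := by
    refine tendsto_nhdsWithin_iff.2 ⟨?_, ?_⟩
    · simpa using ((by fun_prop : Continuous fun τ : ℝ => (τ / 2).toNNReal).tendsto 0).mono_left
        nhdsWithin_le_nhds
    · filter_upwards [self_mem_nhdsWithin] with τ (hτ : 0 < τ)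
      simpa using hτ
  have hpeak := (tendsto_setIntegral_gaussianPDFReal_smul measurableSet_Ioo
    (Ioo_mem_nhds (by linarith [hz.1]) hz.2) integrableOn_inv_sqrt_one_sub_sq
    (ContinuousAt.inv₀ (by fun_prop) (sqrt_pos.2 hz1).ne')).comp hvar
  rw [div_eq_mul_inv]
  refine (hpeak.const_mul (2 * √π)).congr' ?_
  filter_upwards [self_mem_nhdsWithin] with τ (hτ : 0 < τ)
  rw [integral_comp_sin_zero_two_pi (F := fun u => exp (-(u - z) ^ 2 / τ)) (by fun_prop),
    setIntegral_Ioo_comp_sin (fun u => exp (-(u - z) ^ 2 / τ))]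
  simp only [Function.comp, gaussianPDFReal_toNNReal_half hτ, smul_eq_mul, mul_assoc,
    mul_comm (exp _), MeasureTheory.integral_const_mul]
  rw [sqrt_mul pi_pos.le, sqrt_inv]
  field_simp
end

section
/- Let M₁,...,M_N be measure spaces with probability measures μ_j, with bounded symmetric kernels u_j on M_j × M_j, and kernel v(p,q) = Σ_j u_j(p_j,q_j) on the product space M = ∏ M_j with product measure μ. If f_j solves the Onsager equation f_j = Z_j^{-1} e^{-b U_j[f_j]} on M_j for each j, then the product f(p) = ∏_j f_j(p_j) solves the Onsager equation f = Z^{-1} e^{-b U[f]} on M with kernel v, where Z = ∏_j Z_j. -/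
/-! The kernel `v(p, q) = ∑ⱼ uⱼ(pⱼ, qⱼ)` is a sum of one-coordinate kernels, so by Fubini each term
of `U[f](p)` integrates out all coordinates but the `j`-th, where every other factor contributes
`∫ fₖ dμₖ = 1`. Hence `U[f](p) = ∑ⱼ Uⱼ[fⱼ](pⱼ)`, and the Onsager equation for `f` is the product of
the Onsager equations for the `fⱼ`, since `exp` turns the sum into a product. -/

open MeasureTheory

section PiIntegral

variable {ι : Type*} [Fintype ι] {M : ι → Type*}

lemma mul_prod_eq_prod_update {R : Type*} [CommMonoid R] [DecidableEq ι] (f : ∀ i, M i → R)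
    (j : ι) (g : M j → R) (q : ∀ i, M i) :
    g (q j) * ∏ i, f i (q i) = ∏ i, Function.update f j (fun x ↦ g x * f j x) i (q i) := by
  rw [Fintype.prod_eq_mul_prod_compl j, Fintype.prod_eq_mul_prod_compl j, ← mul_assoc,
    Function.update_self]
  congr 1
  refine Finset.prod_congr rfl fun i hi ↦ ?_
  rw [Function.update_of_ne (by simpa using hi)]

variable [∀ i, MeasurableSpace (M i)] {μ : ∀ i, Measure (M i)} [∀ i, SigmaFinite (μ i)]

lemma integral_pi_mul_prod_of_integral_eq_one (f : ∀ i, M i → ℝ)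
    (hf : ∀ i, ∫ x, f i x ∂μ i = 1) (j : ι) (g : M j → ℝ) :
    ∫ q, g (q j) * ∏ i, f i (q i) ∂Measure.pi μ = ∫ x, g x * f j x ∂μ j := by
  classical
  simp_rw [mul_prod_eq_prod_update f j g, integral_fintype_prod_eq_prod,
    Fintype.prod_eq_mul_prod_compl j, Function.update_self]
  rw [Finset.prod_eq_one fun i hi ↦ ?_, mul_one]
  rw [Function.update_of_ne (by simpa using hi), hf]

lemma integrable_pi_mul_prod {f : ∀ i, M i → ℝ} (hf : ∀ i, Integrable (f i) (μ i)) {j : ι}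
    {g : M j → ℝ} (hg : Integrable (fun x ↦ g x * f j x) (μ j)) :
    Integrable (fun q ↦ g (q j) * ∏ i, f i (q i)) (Measure.pi μ) := by
  classical
  simp_rw [mul_prod_eq_prod_update f j g]
  refine Integrable.fintype_prod_dep fun i ↦ ?_
  rcases eq_or_ne i j with rfl | hij
  · simpa using hg
  · simpa [Function.update_of_ne hij] using hf i

lemma integral_pi_sum_mul_prod_eq_sum {f : ∀ i, M i → ℝ} (hf : ∀ i, Integrable (f i) (μ i))
    (hf_one : ∀ i, ∫ x, f i x ∂μ i = 1) {g : ∀ i, M i → ℝ}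
    (hg : ∀ i, Integrable (fun x ↦ g i x * f i x) (μ i)) :
    ∫ q, (∑ j, g j (q j)) * ∏ i, f i (q i) ∂Measure.pi μ = ∑ j, ∫ x, g j x * f j x ∂μ j := by
  simp_rw [Finset.sum_mul]
  rw [integral_finsetSum _ fun j _ ↦ integrable_pi_mul_prod hf (hg j)]
  exact Finset.sum_congr rfl fun j _ ↦ integral_pi_mul_prod_of_integral_eq_one f hf_one j (g j)

end PiIntegral

lemma integrable_kernel_mul_of_abs_le {α : Type*} [MeasurableSpace α] {μ : Measure α}
    {u : α → α → ℝ} (hu : Measurable (Function.uncurry u)) {C : ℝ} (hC : ∀ p q, |u p q| ≤ C)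
    {f : α → ℝ} (hf : Integrable f μ) (p : α) :
    Integrable (fun q ↦ u p q * f q) μ :=
  hf.bdd_mul (hu.comp measurable_prodMk_left |>.aestronglyMeasurable) (ae_of_all _ (hC p))

theorem product_onsager_solution_general {N : ℕ} {M : Fin N → Type*}
    [∀ j, MeasurableSpace (M j)]
    (μ : ∀ j, Measure (M j)) [∀ j, IsProbabilityMeasure (μ j)]
    (u : ∀ j, M j → M j → ℝ)
    (hu_meas : ∀ j, Measurable (Function.uncurry (u j)))
    (C : ℝ) (hu_bd : ∀ j p q, |u j p q| ≤ C)
    (b : ℝ)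
    (f : ∀ j, M j → ℝ)
    (hf_int : ∀ j, Integrable (f j) (μ j))
    (hf_norm : ∀ j, (∫ q, f j q ∂(μ j)) = 1)
    (Z : Fin N → ℝ)
    (honsager : ∀ j, ∀ p, f j p = (Z j)⁻¹ *
        Real.exp (-b * ∫ q, u j p q * f j q ∂(μ j))) :
    ∀ p : ∀ j, M j,
      (∏ j, f j (p j)) = (∏ j, Z j)⁻¹ *
        Real.exp (-b * ∫ q, (∑ j, u j (p j) (q j)) * ∏ j, f j (q j)
            ∂(Measure.pi μ)) := by
  intro p
  rw [integral_pi_sum_mul_prod_eq_sum hf_int hf_norm fun j ↦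
    integrable_kernel_mul_of_abs_le (hu_meas j) (hu_bd j) (hf_int j) (p j)]
  simp_rw [honsager _ (p _), Finset.prod_mul_distrib, Finset.prod_inv_distrib, Finset.mul_sum,
    Real.exp_sum]

theorem product_onsager_solution {N : ℕ} {M : Fin N → Type*}
    [∀ j, MeasurableSpace (M j)]
    (μ : ∀ j, Measure (M j)) [∀ j, IsProbabilityMeasure (μ j)]
    (u : ∀ j, M j → M j → ℝ)
    (hu_meas : ∀ j, Measurable (Function.uncurry (u j)))
    (hu_symm : ∀ j p q, u j p q = u j q p)
    (C : ℝ) (hu_bd : ∀ j p q, |u j p q| ≤ C)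
    (b : ℝ)
    (f : ∀ j, M j → ℝ) (hf_meas : ∀ j, Measurable (f j))
    (hf_int : ∀ j, Integrable (f j) (μ j))
    (hf_norm : ∀ j, (∫ q, f j q ∂(μ j)) = 1)
    (Z : Fin N → ℝ)
    (hZ : ∀ j, Z j = ∫ p, Real.exp (-b * ∫ q, u j p q * f j q ∂(μ j)) ∂(μ j))
    (honsager : ∀ j, ∀ p, f j p = (Z j)⁻¹ *
        Real.exp (-b * ∫ q, u j p q * f j q ∂(μ j))) :
    ∀ p : ∀ j, M j,
      (∏ j, f j (p j)) = (∏ j, Z j)⁻¹ *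
        Real.exp (-b * ∫ q, (∑ j, u j (p j) (q j)) * ∏ j, f j (q j)
            ∂(Measure.pi μ)) :=
  product_onsager_solution_general μ u hu_meas C hu_bd b f hf_int hf_norm Z honsager
end

section
/- Let M be a compact metric space, μ a Borel probability on M, u : [0,∞) → ℝ nonnegative, bounded, Lipschitz. Let g_n be solutions of the Onsager equation g_n = Z_n^{-1} e^{-b_n U_n} with U_n(x) = ∫ u(d(x,y)) g_n(y) dμ(y) and b_n → ∞, such that U_n → U_∞ uniformly and μ satisfies μ(B(x,r)) ≥ c·e^{-r^{-k}} with 0 < k < 1. Then for any continuous φ supported in {x : U_∞(x) > min U_∞}, lim_n ∫ φ g_n dμ = 0. -/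
/-!
Each `U n` is `L`-Lipschitz, being an average of the `L`-Lipschitz functions `x ↦ u (dist x y)`
against the probability density `g n`; hence `Uinf` is continuous, and on the compact support of
`φ` it exceeds its value at some near-minimiser `x₀` by a gap `θ > 0`, as does `U n` (by `θ / 2`)
for large `n`. On the ball of radius `1 / b n` around `x₀` we have `U n ≤ U n x₀ + L / b n`, so the
ball-mass bound gives `∫ exp (-b n * U n) ≥ c e^{-(b n)^k} e^{-b n U n x₀ - L}`. Hence
`g n ≤ c⁻¹ e^{L + (b n)^k - b n θ / 2}` on the support of `φ`, which tends to `0` because `k < 1`.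
-/

open MeasureTheory Real Filter Metric Set

section CompactMetric

variable {M : Type*} [MetricSpace M] [CompactSpace M] [MeasurableSpace M] [OpensMeasurableSpace M]
  {μ : Measure M}

theorem integrable_comp_dist_mul {u : ℝ → ℝ} (hu : Continuous u) {g : M → ℝ}
    (hg : Integrable g μ) (x : M) : Integrable (fun y => u (dist x y) * g y) μ :=
  integrableOn_univ.mp <| IntegrableOn.continuousOn_mul (by fun_prop) hg.integrableOn isCompact_univ

theorem lipschitzWith_integral_comp_dist_mul {u : ℝ → ℝ} {L : NNReal} (hu : LipschitzWith L u)
    {g : M → ℝ} (hg : Integrable g μ) (hg0 : 0 ≤ g) (hg1 : ∫ y, g y ∂μ = 1) :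
    LipschitzWith L (fun x => ∫ y, u (dist x y) * g y ∂μ) := by
  have hint := integrable_comp_dist_mul hu.continuous hg
  refine LipschitzWith.of_dist_le_mul fun x x' => ?_
  rw [dist_eq_norm, ← integral_sub (hint x) (hint x')]
  calc ‖∫ y, (u (dist x y) * g y - u (dist x' y) * g y) ∂μ‖
      ≤ ∫ y, L * dist x x' * g y ∂μ := by
        refine norm_integral_le_of_norm_le (hg.const_mul _) (ae_of_all _ fun y => ?_)
        rw [← sub_mul, norm_mul, Real.norm_of_nonneg (hg0 y), ← dist_eq_norm]
        exact mul_le_mul_of_nonneg_right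
          ((hu.dist_le_mul _ _).trans (by gcongr; exact dist_dist_dist_le_left x x' y)) (hg0 y)
    _ = L * dist x x' := by rw [integral_const_mul, hg1, mul_one]

variable [IsFiniteMeasure μ] {V : M → ℝ} {L : NNReal}

theorem exp_mul_measureReal_ball_le_integral_exp (hV : LipschitzWith L V) {β : ℝ} (hβ : 0 ≤ β)
    (x₀ : M) (r : ℝ) :
    exp (-β * (V x₀ + L * r)) * μ.real (ball x₀ r) ≤ ∫ y, exp (-β * V y) ∂μ := by
  have hint : Integrable (fun y => exp (-β * V y)) μ :=
    integrableOn_univ.mp <| ContinuousOn.integrableOn_compact isCompact_univ <| by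
      have := hV.continuous; fun_prop
  calc exp (-β * (V x₀ + L * r)) * μ.real (ball x₀ r)
      ≤ ∫ y in ball x₀ r, exp (-β * V y) ∂μ := by
        refine setIntegral_ge_of_const_le_real measurableSet_ball (measure_ne_top μ _)
          (fun y hy => exp_le_exp.mpr ?_) hint.integrableOn
        have hVy : V y - V x₀ ≤ L * r := by
          calc V y - V x₀ ≤ dist (V y) (V x₀) := le_abs_self _
            _ ≤ L * dist y x₀ := hV.dist_le_mul y x₀
            _ ≤ L * r := by gcongr; exact (mem_ball.mp hy).le
        nlinarith
    _ ≤ ∫ y, exp (-β * V y) ∂μ :=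
        setIntegral_le_integral hint (ae_of_all _ fun _ => (exp_pos _).le)

theorem gibbs_density_le {c k r₀ : ℝ} (hc : 0 < c) (hr₀ : 0 < r₀)
    (hball : ∀ x : M, ∀ r : ℝ, 0 < r → r ≤ r₀ →
      ENNReal.ofReal (c * exp (-r ^ (-k))) ≤ μ (ball x r))
    (hV : LipschitzWith L V) {β : ℝ} (hβ : r₀⁻¹ ≤ β) (x₀ x : M) :
    (∫ y, exp (-β * V y) ∂μ)⁻¹ * exp (-β * V x) ≤ c⁻¹ * exp (L + β ^ k - β * (V x - V x₀)) := by
  have hβ0 : 0 < β := (inv_pos.mpr hr₀).trans_le hβ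
  have hball' : c * exp (-β ^ k) ≤ μ.real (ball x₀ β⁻¹) := by
    rw [measureReal_def, ← ENNReal.ofReal_le_iff_le_toReal (measure_ne_top μ _)]
    simpa [Real.inv_rpow hβ0.le, Real.rpow_neg hβ0.le] using
      hball x₀ β⁻¹ (inv_pos.mpr hβ0) (inv_le_of_inv_le₀ hr₀ hβ)
  have hZ : c * exp (-β ^ k) * exp (-β * (V x₀ + L * β⁻¹)) ≤ ∫ y, exp (-β * V y) ∂μ := calc
    _ ≤ exp (-β * (V x₀ + L * β⁻¹)) * μ.real (ball x₀ β⁻¹) := by rw [mul_comm]; gcongr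
    _ ≤ _ := exp_mul_measureReal_ball_le_integral_exp hV hβ0.le x₀ β⁻¹
  calc (∫ y, exp (-β * V y) ∂μ)⁻¹ * exp (-β * V x)
      ≤ (c * exp (-β ^ k) * exp (-β * (V x₀ + L * β⁻¹)))⁻¹ * exp (-β * V x) := by gcongr
    _ = c⁻¹ * exp (L + β ^ k - β * (V x - V x₀)) := by
        rw [mul_inv, mul_inv, ← exp_neg, ← exp_neg, mul_assoc, mul_assoc, ← exp_add, ← exp_add]
        congr 2
        field_simp
        ring

end CompactMetric

theorem IsCompact.exists_add_le_of_sInf_range_lt {X : Type*} [TopologicalSpace X] [Nonempty X]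
    {f : X → ℝ} {s : Set X} (hs : IsCompact s) (hf : ContinuousOn f s)
    (h : ∀ x ∈ s, sInf (range f) < f x) : ∃ x₀, ∃ θ > 0, ∀ x ∈ s, f x₀ + θ ≤ f x := by
  obtain ⟨a, ha, has⟩ := hs.exists_forall_le' hf h
  obtain ⟨_, ⟨x₀, rfl⟩, hx₀⟩ :=
    Real.lt_sInf_add_pos (range_nonempty f) (half_pos (sub_pos.mpr ha))
  exact ⟨x₀, (a - sInf (range f)) / 2, half_pos (sub_pos.mpr ha), fun x hx => by
    linarith [has x hx]⟩

theorem TendstoUniformly.eventually_add_le {X ι : Type*} {F : ι → X → ℝ} {f : X → ℝ}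
    {l : Filter ι} (hF : TendstoUniformly F f l) {x₀ : X} {θ : ℝ} (hθ : 0 < θ) {s : Set X}
    (hs : ∀ x ∈ s, f x₀ + θ ≤ f x) : ∀ᶠ n in l, ∀ x ∈ s, F n x₀ + θ / 2 ≤ F n x := by
  filter_upwards [Metric.tendstoUniformly_iff.mp hF (θ / 4) (by positivity)] with n hn x hx
  linarith [hs x hx, abs_lt.mp (hn x₀), abs_lt.mp (hn x)]

theorem tendsto_rpow_sub_mul_atTop_atBot {k θ : ℝ} (hk : k < 1) (hθ : 0 < θ) :
    Tendsto (fun t : ℝ => t ^ k - θ * t) atTop atBot := by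
  have hsmall : ∀ᶠ t : ℝ in atTop, t ^ (k - 1) ≤ θ / 2 := by
    have := tendsto_rpow_neg_atTop (sub_pos.mpr hk)
    rw [neg_sub] at this
    exact this.eventually (eventually_le_nhds (half_pos hθ))
  refine tendsto_atBot_mono' atTop ?_
    (tendsto_neg_atTop_atBot.comp (tendsto_id.const_mul_atTop (half_pos hθ)))
  filter_upwards [hsmall, eventually_gt_atTop 0] with t ht ht0
  have : t ^ k = t ^ (k - 1) * t := by rw [← rpow_add_one ht0.ne']; ring_nf
  simp only [Function.comp_apply, id]
  nlinarith

theorem tendsto_integral_mul_of_norm_le_on_tsupport {X ι : Type*} [TopologicalSpace X]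
    [MeasurableSpace X] {μ : Measure X} [IsFiniteMeasure μ] {φ : X → ℝ} {K : ℝ}
    (hφ : ∀ x, ‖φ x‖ ≤ K) {g : ι → X → ℝ} {ε : ι → ℝ} {l : Filter ι}
    (hε : Tendsto ε l (nhds 0)) (hg : ∀ᶠ n in l, ∀ x ∈ tsupport φ, ‖g n x‖ ≤ ε n) :
    Tendsto (fun n => ∫ x, φ x * g n x ∂μ) l (nhds 0) := by
  refine squeeze_zero_norm' ?_
    (by simpa using (hε.abs.const_mul (max K 0)).mul_const (μ.real univ))
  filter_upwards [hg] with n hn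
  refine norm_integral_le_of_norm_le_const (ae_of_all _ fun x => ?_)
  by_cases hx : x ∈ tsupport φ
  · rw [norm_mul]
    exact mul_le_mul ((hφ x).trans (le_max_left _ _)) ((hn x hx).trans (le_abs_self _))
      (norm_nonneg _) (le_max_right _ _)
  · rw [image_eq_zero_of_notMem_tsupport hx, zero_mul, norm_zero]
    positivity

theorem onsager_concentration_general {M : Type*} [MetricSpace M] [CompactSpace M]
    [MeasurableSpace M] [BorelSpace M]
    (μ : Measure M) [IsProbabilityMeasure μ]
    (c k r₀ : ℝ) (hc : 0 < c) (hk1 : k < 1) (hr₀ : 0 < r₀)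
    (hball : ∀ x : M, ∀ r : ℝ, 0 < r → r ≤ r₀ →
      ENNReal.ofReal (c * Real.exp (-r ^ (-k))) ≤ μ (Metric.ball x r))
    (u : ℝ → ℝ) (L : NNReal)
    (huL : LipschitzWith L u)
    (b : ℕ → ℝ) (hb : Tendsto b atTop atTop)
    (g : ℕ → M → ℝ)
    (hg_nonneg : ∀ n x, 0 ≤ g n x)
    (hg_int : ∀ n, Integrable (g n) μ)
    (hg_norm : ∀ n, (∫ x, g n x ∂μ) = 1)
    (U : ℕ → M → ℝ)
    (hU : ∀ n x, U n x = ∫ y, u (dist x y) * g n y ∂μ)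
    (honsager : ∀ n x, g n x =
      (∫ y, Real.exp (-(b n) * U n y) ∂μ)⁻¹ * Real.exp (-(b n) * U n x))
    (Uinf : M → ℝ)
    (hUconv : TendstoUniformly U Uinf atTop) :
    ∀ φ : M → ℝ, Continuous φ →
      (∀ x ∈ tsupport φ, sInf (Set.range Uinf) < Uinf x) →
      Tendsto (fun n => ∫ x, φ x * g n x ∂μ) atTop (nhds 0) := by
  intro φ hφ hsupp
  have := nonempty_of_isProbabilityMeasure μ
  have hUlip (n : ℕ) : LipschitzWith L (U n) := by
    rw [funext (hU n)]
    exact lipschitzWith_integral_comp_dist_mul huL (hg_int n) (hg_nonneg n) (hg_norm n)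
  have hUinf : Continuous Uinf :=
    hUconv.continuous (Eventually.of_forall fun n => (hUlip n).continuous).frequently
  obtain ⟨x₀, θ, hθ, hgap⟩ :=
    (isClosed_tsupport φ).isCompact.exists_add_le_of_sInf_range_lt hUinf.continuousOn hsupp
  have hdensity : ∀ᶠ n in atTop, ∀ x ∈ tsupport φ,
      ‖g n x‖ ≤ c⁻¹ * exp (L + b n ^ k - θ / 2 * b n) := by
    filter_upwards [hUconv.eventually_add_le hθ hgap, hb.eventually_ge_atTop r₀⁻¹]
      with n hgapn hbn x hx
    rw [Real.norm_of_nonneg (hg_nonneg n x), honsager]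
    refine (gibbs_density_le hc hr₀ hball (hUlip n) hbn x₀ x).trans ?_
    gcongr c⁻¹ * exp (_ - ?_)
    nlinarith [hgapn x hx, (inv_pos.mpr hr₀).trans_le hbn]
  obtain ⟨K, hK⟩ := isCompact_univ.exists_bound_of_continuousOn hφ.continuousOn
  refine tendsto_integral_mul_of_norm_le_on_tsupport (fun x => hK x (mem_univ x)) ?_ hdensity
  have hexponent : Tendsto (fun n => L + b n ^ k - θ / 2 * b n) atTop atBot := by
    simpa only [add_sub_assoc, Function.comp_def] using tendsto_atBot_add_const_left _ (L : ℝ)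
      ((tendsto_rpow_sub_mul_atTop_atBot hk1 (half_pos hθ)).comp hb)
  simpa using (tendsto_exp_atBot.comp hexponent).const_mul c⁻¹

theorem onsager_concentration {M : Type*} [MetricSpace M] [CompactSpace M]
    [MeasurableSpace M] [BorelSpace M]
    (μ : Measure M) [IsProbabilityMeasure μ]
    (c k r₀ : ℝ) (hc : 0 < c) (hk : 0 < k) (hk1 : k < 1) (hr₀ : 0 < r₀)
    (hball : ∀ x : M, ∀ r : ℝ, 0 < r → r ≤ r₀ →
      ENNReal.ofReal (c * Real.exp (-r ^ (-k))) ≤ μ (Metric.ball x r))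
    (u : ℝ → ℝ) (C : ℝ) (L : NNReal)
    (hu0 : ∀ d, 0 ≤ u d) (huC : ∀ d, u d ≤ C) (huL : LipschitzWith L u)
    (b : ℕ → ℝ) (hbpos : ∀ n, 0 < b n) (hb : Tendsto b atTop atTop)
    (g : ℕ → M → ℝ) (hg_meas : ∀ n, Measurable (g n))
    (hg_nonneg : ∀ n x, 0 ≤ g n x)
    (hg_int : ∀ n, Integrable (g n) μ)
    (hg_norm : ∀ n, (∫ x, g n x ∂μ) = 1)
    (U : ℕ → M → ℝ)
    (hU : ∀ n x, U n x = ∫ y, u (dist x y) * g n y ∂μ)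
    (honsager : ∀ n x, g n x =
      (∫ y, Real.exp (-(b n) * U n y) ∂μ)⁻¹ * Real.exp (-(b n) * U n x))
    (Uinf : M → ℝ)
    (hUconv : TendstoUniformly U Uinf atTop) :
    ∀ φ : M → ℝ, Continuous φ →
      (∀ x ∈ tsupport φ, sInf (Set.range Uinf) < Uinf x) →
      Tendsto (fun n => ∫ x, φ x * g n x ∂μ) atTop (nhds 0) :=
  onsager_concentration_general μ c k r₀ hc hk1 hr₀ hball u L huL b hb g hg_nonneg hg_int hg_norm U
    hU honsager Uinf hUconv
end
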